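/- Suppose that for some constant A the Petrov inequality holds: for all n, all independent centered random variables X₁,…,Xₙ with positive finite total variance Bₙ², all x ∈ ℝ, and all g ∈ 𝒢 with finite E Xₖ² g(Xₖ), one has |P(Sₙ < x Bₙ) − Φ(x)| ≤ A·(Σₖ E Xₖ² g(Xₖ))/((1+|x|)² Bₙ² g((1+|x|)Bₙ)). Then A ≥ (1 + √(q/p))²·|q − Φ(√(q/p))| for every p ∈ (0,1), q = 1−p; in particular A > 1.6153. -/

import Mathlib

open MeasureTheory ProbabilityTheory

/-- The standard normal distribution function. -/
noncomputable def Phi (x : ℝ) : ℝ :=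
  (Real.sqrt (2 * Real.pi))⁻¹ * ∫ t in Set.Iio x, Real.exp (-t ^ 2 / 2)

/-!
Take `n = 1`, `g ≡ 1` and the standardized two-point variable equal to `√(q/p)` with probability
`p` and to `-√(p/q)` with probability `q`. At `x = √(q/p)` one has `P(X < x) = q`, so Petrov's
inequality reads `|q - Φ(√(q/p))| ≤ A / (1 + √(q/p))²`.

For the numerical bound, `e^{-u}` lies above its Taylor polynomials of even length for `u ≥ 0`;
integrating the one of length 18 at `u = t² / 2` bounds `Φ` from below sharply enough at
`p = 6250 / 41631`.
-/

open Real Finset Nat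

lemma integrable_exp_neg_sq_div_two : Integrable fun t : ℝ => exp (-t ^ 2 / 2) := by
  simpa [neg_div, div_eq_inv_mul] using integrable_exp_neg_mul_sq (b := 1 / 2) (by norm_num)

lemma integral_exp_neg_sq_div_two : ∫ t, exp (-t ^ 2 / 2) = √(2 * π) := by
  simpa [neg_div, div_eq_inv_mul, mul_comm] using integral_gaussian (1 / 2)

lemma integral_Ioi_exp_neg_sq_div_two : ∫ t in Set.Ioi 0, exp (-t ^ 2 / 2) = √(2 * π) / 2 := by
  simpa [neg_div, div_eq_inv_mul, mul_comm] using integral_gaussian_Ioi (1 / 2)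

lemma integral_Iic_exp_neg_sq_div_two : ∫ t in Set.Iic 0, exp (-t ^ 2 / 2) = √(2 * π) / 2 := by
  have h := integral_add_compl (measurableSet_Iic (a := 0)) integrable_exp_neg_sq_div_two
  rw [Set.compl_Iic, integral_Ioi_exp_neg_sq_div_two, integral_exp_neg_sq_div_two] at h
  linarith

lemma Phi_eq_half_add (x : ℝ) :
    Phi x = 1 / 2 + (√(2 * π))⁻¹ * ∫ t in 0..x, exp (-t ^ 2 / 2) := by
  have hsplit := intervalIntegral.integral_Iic_sub_Iic (a := 0) (b := x)
    integrable_exp_neg_sq_div_two.integrableOn integrable_exp_neg_sq_div_two.integrableOn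
  have hpos : 0 < √(2 * π) := by positivity
  rw [Phi, ← integral_Iic_eq_integral_Iio, ← hsplit, integral_Iic_exp_neg_sq_div_two]
  field_simp
  ring

lemma hasDerivAt_sum_range_succ_pow_div_factorial (n : ℕ) (u : ℝ) :
    HasDerivAt (fun u : ℝ => ∑ k ∈ range (n + 1), u ^ k / k !) (∑ k ∈ range n, u ^ k / k !) u := by
  have hterm := HasDerivAt.fun_sum (u := range (n + 1))
    fun k _ => (hasDerivAt_pow k u).div_const (k ! : ℝ)
  refine hterm.congr_deriv ?_
  rw [sum_range_succ']
  simp only [CharP.cast_eq_zero, zero_mul, zero_div, add_zero]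
  refine sum_congr rfl fun k _ => ?_
  rw [factorial_succ, Nat.add_sub_cancel]
  push_cast
  field_simp

lemma neg_one_pow_mul_exp_neg_sub_sum_nonneg (n : ℕ) {u : ℝ} (hu : 0 ≤ u) :
    0 ≤ (-1) ^ n * (exp (-u) - ∑ k ∈ range n, (-u) ^ k / k !) := by
  induction n generalizing u with
  | zero => simpa using (exp_pos (-u)).le
  | succ n ih =>
    set G : ℝ → ℝ := fun u => (-1) ^ (n + 1) * (exp (-u) - ∑ k ∈ range (n + 1), (-u) ^ k / k !)
    have hG : ∀ v, HasDerivAt G ((-1) ^ n * (exp (-v) - ∑ k ∈ range n, (-v) ^ k / k !)) v := by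
      intro v
      have h := ((hasDerivAt_neg v).exp.sub
        ((hasDerivAt_sum_range_succ_pow_div_factorial n (-v)).comp v (hasDerivAt_neg v))).const_mul
        ((-1 : ℝ) ^ (n + 1))
      exact h.congr_deriv (by ring)
    have hmono : MonotoneOn G (Set.Ici 0) :=
      monotoneOn_of_deriv_nonneg (convex_Ici 0)
        (fun v _ => (hG v).continuousAt.continuousWithinAt)
        (fun v _ => (hG v).differentiableAt.differentiableWithinAt)
        (fun v hv => (hG v).deriv ▸ ih (interior_subset hv))
    have hG0 : G 0 = 0 := by simp [G, sum_range_succ']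
    simpa [hG0] using hmono Set.self_mem_Ici hu hu

lemma sum_le_exp_neg_sq_div_two {n : ℕ} (hn : Even n) (t : ℝ) :
    ∑ k ∈ range n, (-1 / 2) ^ k / k ! * t ^ (2 * k) ≤ exp (-t ^ 2 / 2) := by
  have h := neg_one_pow_mul_exp_neg_sub_sum_nonneg n (u := t ^ 2 / 2) (by positivity)
  rw [hn.neg_one_pow, one_mul, sub_nonneg] at h
  convert h using 1
  · refine sum_congr rfl fun k _ => ?_
    rw [show -(t ^ 2 / 2) = -1 / 2 * t ^ 2 by ring, mul_pow, pow_mul]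
    ring
  · ring_nf

lemma sum_le_integral_exp_neg_sq_div_two {n : ℕ} (hn : Even n) {x : ℝ} (hx : 0 ≤ x) :
    ∑ k ∈ range n, (-1 / 2) ^ k / k ! * (x ^ (2 * k + 1) / (2 * k + 1)) ≤
      ∫ t in 0..x, exp (-t ^ 2 / 2) := by
  have hint : ∫ t in 0..x, ∑ k ∈ range n, (-1 / 2 : ℝ) ^ k / k ! * t ^ (2 * k) =
      ∑ k ∈ range n, (-1 / 2) ^ k / k ! * (x ^ (2 * k + 1) / (2 * k + 1)) := by
    rw [intervalIntegral.integral_finsetSum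
      fun k _ => (by fun_prop : Continuous _).intervalIntegrable _ _]
    simp [integral_pow]
  rw [← hint]
  exact intervalIntegral.integral_mono_on hx
    ((by fun_prop : Continuous _).intervalIntegrable _ _)
    ((by fun_prop : Continuous _).intervalIntegrable _ _) fun t _ => sum_le_exp_neg_sq_div_two hn t

lemma half_add_sum_le_Phi {n : ℕ} (hn : Even n) {x : ℝ} (hx : 0 ≤ x) :
    1 / 2 + (√(2 * π))⁻¹ * ∑ k ∈ range n, (-1 / 2) ^ k / k ! * (x ^ (2 * k + 1) / (2 * k + 1)) ≤
      Phi x := by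
  rw [Phi_eq_half_add]
  gcongr
  exact sum_le_integral_exp_neg_sq_div_two hn hx

def PetrovInequality (A : ℝ) : Prop :=
  ∀ (Ω : Type) (_ : MeasurableSpace Ω) (μ : Measure Ω),
    IsProbabilityMeasure μ →
    ∀ (n : ℕ) (X : Fin n → Ω → ℝ),
    iIndepFun X μ →
    (∀ k, Measurable (X k)) →
    (∀ k, Integrable (fun ω => (X k ω) ^ 2) μ) →
    (∀ k, (∫ ω, X k ω ∂μ) = 0) →
    ∀ Bn : ℝ, 0 < Bn → Bn ^ 2 = (∑ k, ∫ ω, (X k ω) ^ 2 ∂μ) →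
    ∀ g : ℝ → ℝ,
      (∀ u, 0 ≤ g u) → (∀ u, g (-u) = g u) → (∀ u, 0 < u → 0 < g u) →
      MonotoneOn g (Set.Ioi (0 : ℝ)) →
      MonotoneOn (fun u => u / g u) (Set.Ioi (0 : ℝ)) →
      (∀ k, Integrable (fun ω => (X k ω) ^ 2 * g (X k ω)) μ) →
    ∀ x : ℝ,
      |(μ {ω | (∑ k, X k ω) < x * Bn}).toReal - Phi x| ≤
        A * (∑ k, ∫ ω, (X k ω) ^ 2 * g (X k ω) ∂μ) /
          ((1 + |x|) ^ 2 * Bn ^ 2 * g ((1 + |x|) * Bn))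

lemma PetrovInequality.abs_sub_Phi_le {A : ℝ} (hA : PetrovInequality A) {Ω : Type}
    [MeasurableSpace Ω] {μ : Measure Ω} [IsProbabilityMeasure μ] {Y : Ω → ℝ} (hY : Measurable Y)
    (hY2 : Integrable (fun ω => Y ω ^ 2) μ) (hmean : ∫ ω, Y ω ∂μ = 0)
    (hvar : ∫ ω, Y ω ^ 2 ∂μ = 1) (x : ℝ) :
    |μ.real {ω | Y ω < x} - Phi x| ≤ A / (1 + |x|) ^ 2 := by
  have h := hA Ω _ μ inferInstance 1 (fun _ => Y) .of_subsingleton (fun _ => hY) (fun _ => hY2)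
    (fun _ => hmean) 1 one_pos (by simp [hvar]) (fun _ => 1) (fun _ => zero_le_one)
    (fun _ => rfl) (fun _ _ => one_pos) monotoneOn_const (fun u _ v _ huv => by simpa using huv)
    (fun _ => by simpa using hY2) x
  rw [measureReal_def]
  simpa [hvar] using h

lemma PetrovInequality.le_of_mem_Ioo {A : ℝ} (hA : PetrovInequality A) {p : ℝ}
    (hp : p ∈ Set.Ioo 0 1) :
    (1 + √((1 - p) / p)) ^ 2 * |(1 - p) - Phi √((1 - p) / p)| ≤ A := by
  obtain ⟨hp0, hp1⟩ := hp
  have hq0 : 0 < 1 - p := sub_pos.2 hp1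
  set a := √((1 - p) / p)
  set b := √(p / (1 - p))
  set P : unitInterval := ⟨p, hp0.le, hp1.le⟩
  have hmean : p * a + (1 - p) * -b = 0 := by
    simp only [a, b, sqrt_div hp0.le, sqrt_div hq0.le]
    field_simp
    rw [sq_sqrt hp0.le, sq_sqrt hq0.le]
    ring
  have hvar : p * a ^ 2 + (1 - p) * (-b) ^ 2 = 1 := by
    rw [neg_sq, sq_sqrt (by positivity), sq_sqrt (by positivity)]
    field_simp
    ring
  have hb : 0 < b := by positivity
  have h := hA.abs_sub_Phi_le (μ := Ber(a, -b, P)) measurable_id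
    (integrable_bernoulliMeasure _ _ _ _) (by simpa [integral_bernoulliMeasure, P] using hmean)
    (by simpa [integral_bernoulliMeasure, P] using hvar) a
  have hP : Ber(a, -b, P).real {z | id z < a} = 1 - p :=
    bernoulliMeasure_real_apply_of_notMem_of_mem P measurableSet_Iio (lt_irrefl a)
      (show -b < a by linarith [sqrt_nonneg ((1 - p) / p)])
  rw [hP, abs_of_nonneg (sqrt_nonneg _), le_div_iff₀ (by positivity)] at h
  linarith

lemma Phi_sqrt_35381_div_6250_ge : 0.5 + 0.517625 * 0.949194 ≤ Phi √(35381 / 6250) := by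
  set x := √(35381 / 6250)
  have hx2 : x ^ 2 = 35381 / 6250 := sq_sqrt (by norm_num)
  have hsum : 0.517625 ≤
      ∑ k ∈ range 18, (-1 / 2 : ℝ) ^ k / k ! * ((35381 / 6250) ^ k / (2 * k + 1)) := by
    norm_num [sum_range_succ, factorial]
  have hx : 0.949194 ≤ (√(2 * π))⁻¹ * x := by
    rw [← sqrt_inv, ← sqrt_mul (by positivity), le_sqrt (by norm_num) (by positivity),
      inv_mul_eq_div, le_div_iff₀ (by positivity)]
    nlinarith [pi_lt_d6]
  calc 0.5 + 0.517625 * 0.949194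
      ≤ 1 / 2 + (√(2 * π))⁻¹ * x *
          ∑ k ∈ range 18, (-1 / 2 : ℝ) ^ k / k ! * ((35381 / 6250) ^ k / (2 * k + 1)) := by
        nlinarith
    _ = 1 / 2 + (√(2 * π))⁻¹ *
          ∑ k ∈ range 18, (-1 / 2) ^ k / k ! * (x ^ (2 * k + 1) / (2 * k + 1)) := by
        simp only [mul_sum, mul_assoc, pow_succ, pow_mul, hx2]
        ring_nf
    _ ≤ Phi x := half_add_sum_le_Phi (by decide) (sqrt_nonneg _)

/-- If the constant `A` satisfies Petrov's inequality
`|P(Sₙ < xBₙ) − Φ(x)| ≤ A·(Σₖ E Xₖ² g(Xₖ))/((1+|x|)² Bₙ² g((1+|x|)Bₙ))`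
for all `n`, all independent centered square-integrable `X₁,…,Xₙ` with `Bₙ > 0`,
all `x ∈ ℝ` and all `g ∈ 𝒢` with finite `E Xₖ² g(Xₖ)`, then
`A ≥ (1 + √(q/p))²·|q − Φ(√(q/p))|` for every `p ∈ (0,1)`, `q = 1 − p`;
in particular `A > 1.6153`. -/
theorem petrov_const_lower_bound (A : ℝ)
    (hA : ∀ (Ω : Type) (_ : MeasurableSpace Ω) (μ : Measure Ω),
      IsProbabilityMeasure μ →
      ∀ (n : ℕ) (X : Fin n → Ω → ℝ),
      iIndepFun X μ →
      (∀ k, Measurable (X k)) →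
      (∀ k, Integrable (fun ω => (X k ω) ^ 2) μ) →
      (∀ k, (∫ ω, X k ω ∂μ) = 0) →
      ∀ Bn : ℝ, 0 < Bn → Bn ^ 2 = (∑ k, ∫ ω, (X k ω) ^ 2 ∂μ) →
      ∀ g : ℝ → ℝ,
        (∀ u, 0 ≤ g u) → (∀ u, g (-u) = g u) → (∀ u, 0 < u → 0 < g u) →
        MonotoneOn g (Set.Ioi (0 : ℝ)) →
        MonotoneOn (fun u => u / g u) (Set.Ioi (0 : ℝ)) →
        (∀ k, Integrable (fun ω => (X k ω) ^ 2 * g (X k ω)) μ) →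
      ∀ x : ℝ,
        |(μ {ω | (∑ k, X k ω) < x * Bn}).toReal - Phi x| ≤
          A * (∑ k, ∫ ω, (X k ω) ^ 2 * g (X k ω) ∂μ) /
            ((1 + |x|) ^ 2 * Bn ^ 2 * g ((1 + |x|) * Bn))) :
    (∀ p : ℝ, p ∈ Set.Ioo (0 : ℝ) 1 →
      A ≥ (1 + Real.sqrt ((1 - p) / p)) ^ 2 *
        |(1 - p) - Phi (Real.sqrt ((1 - p) / p))|) ∧ A > 1.6153 := by
  have hA' : PetrovInequality A := hA
  refine ⟨fun p hp => hA'.le_of_mem_Ioo hp, ?_⟩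
  -- `p = 6250 / 41631` nearly maximises the bound, which exceeds `1.6153` by about `5 · 10⁻⁵`.
  have hbound := hA'.le_of_mem_Ioo (p := 6250 / 41631) ⟨by norm_num, by norm_num⟩
  norm_num only at hbound
  have ha : 2.37927 ≤ √(35381 / 6250) := by
    rw [le_sqrt (by norm_num) (by norm_num)]
    norm_num
  have hgap : 0.5 + 0.517625 * 0.949194 - 35381 / 41631 ≤
      |35381 / 41631 - Phi √(35381 / 6250)| := by
    rw [abs_sub_comm]
    exact (sub_le_sub_right Phi_sqrt_35381_div_6250_ge _).trans (le_abs_self _)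
  calc (1.6153 : ℝ) < (1 + 2.37927) ^ 2 * (0.5 + 0.517625 * 0.949194 - 35381 / 41631) := by
        norm_num
    _ ≤ (1 + √(35381 / 6250)) ^ 2 * |35381 / 41631 - Phi √(35381 / 6250)| := by
        gcongr
    _ ≤ A := hbound
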